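/- Let H ∈ (0,1), σ > 0, r ∈ ℝ, S₀ > 0, and a, b ∈ ℝ with κ := (a+b)² − 2^{2H}·a·b > 0. Define P : (0,∞) × (0,∞) → ℝ by P(S,t) = (S·√(2πσ²κt^{2H}))^{−1} · exp(−(ln(S/S₀) − rt + (1/2)σ²κt^{2H})²/(2σ²κt^{2H})). Then for all S > 0 and t > 0, P satisfies the Fokker–Planck equation of the generalized fractional Black–Scholes price process: ∂P/∂t = H·κ·t^{2H−1}·∂²(σ²S²P)/∂S² − ∂(rSP)/∂S. -/

import Mathlib

/-!
Write `u = log (S / S₀)` and `V(t) = σ²κ t^{2H}`. Then `P(S, t) = S⁻¹ φ_t(u)`, where `φ_t` is the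
normal density with variance `V(t)` and mean `m(t) = r t - V(t) / 2`, and `φ` solves the heat
equation with drift `∂ₜφ = (V'/2) ∂ᵤ²φ - m' ∂ᵤφ`. Since `S ∂_S = ∂ᵤ`, one has
`∂_S (S P) = φ'/S` and `∂_S² (S² P) = (φ' + φ'')/S`; the Fokker–Planck equation then follows from
`V'/2 = H σ²κ t^{2H-1}` and `m' + V'/2 = r`.
-/

open Real Filter Topology

noncomputable def normalDensity (m V x : ℝ) : ℝ :=
  (√(2 * π * V))⁻¹ * exp (-(x - m) ^ 2 / (2 * V))

theorem hasDerivAt_normalDensity (m V x : ℝ) :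
    HasDerivAt (normalDensity m V) (-((x - m) / V) * normalDensity m V x) x := by
  have h : HasDerivAt (normalDensity m V) _ x :=
    ((((hasDerivAt_id x).sub_const m).pow 2).neg.div_const (2 * V)).exp.const_mul
      (√(2 * π * V))⁻¹
  refine h.congr_deriv ?_
  simp only [normalDensity, id, Pi.pow_apply, Pi.neg_apply]
  ring

theorem hasDerivAt_neg_div_mul_normalDensity (m V x : ℝ) :
    HasDerivAt (fun y => -((y - m) / V) * normalDensity m V y)
      (((x - m) ^ 2 / V ^ 2 - 1 / V) * normalDensity m V x) x := by
  refine ((((hasDerivAt_id x).sub_const m).div_const V).neg.mul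
    (hasDerivAt_normalDensity m V x)).congr_deriv ?_
  simp only [id, Pi.neg_apply]
  ring

theorem HasDerivAt.normalDensity {m V : ℝ → ℝ} {m' V' t : ℝ} (x : ℝ) (hm : HasDerivAt m m' t)
    (hV : HasDerivAt V V' t) (hVt : 0 < V t) :
    HasDerivAt (fun s => _root_.normalDensity (m s) (V s) x)
      (V' / 2 * (((x - m t) ^ 2 / V t ^ 2 - 1 / V t) * _root_.normalDensity (m t) (V t) x)
        - m' * (-((x - m t) / V t) * _root_.normalDensity (m t) (V t) x)) t := by
  have hsqrt := ((hV.const_mul (2 * π)).sqrt (by positivity)).inv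
    (by positivity : √(2 * π * V t) ≠ 0)
  have hexp := ((((hasDerivAt_const t x).sub hm).pow 2).neg.div (hV.const_mul 2)
    (by positivity)).exp
  refine (hsqrt.mul hexp).congr_deriv ?_
  have hsq : √(2 * π * V t) ^ 2 = 2 * π * V t := sq_sqrt (by positivity)
  have hpos : 0 < √(2 * π * V t) := sqrt_pos.2 (by positivity)
  simp only [_root_.normalDensity, Pi.inv_apply, Pi.pow_apply, Pi.neg_apply, Pi.div_apply,
    Pi.sub_apply]
  field_simp
  rw [hsq]
  ring

section LogCoordinate

variable {φ φ' φ'' f : ℝ → ℝ} {S₀ x d : ℝ}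

theorem hasDerivAt_comp_log_div (hφ : HasDerivAt φ d (log (x / S₀))) (hx : x ≠ 0)
    (hS₀ : S₀ ≠ 0) : HasDerivAt (fun y => φ (log (y / S₀))) (d / x) x := by
  refine (hφ.comp x (((hasDerivAt_id x).div_const S₀).log (div_ne_zero hx hS₀))).congr_deriv ?_
  simp only [id]
  field_simp

theorem hasDerivAt_mul_comp_log_div (hφ : HasDerivAt φ d (log (x / S₀))) (hx : x ≠ 0)
    (hS₀ : S₀ ≠ 0) :
    HasDerivAt (fun y => y * φ (log (y / S₀))) (φ (log (x / S₀)) + d) x := by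
  refine ((hasDerivAt_id x).mul (hasDerivAt_comp_log_div hφ hx hS₀)).congr_deriv ?_
  simp only [id]
  field_simp

theorem hasDerivAt_const_mul_self_mul_of_log (hf : ∀ y, 0 < y → f y = y⁻¹ * φ (log (y / S₀)))
    (c : ℝ) (hφ : HasDerivAt φ d (log (x / S₀))) (hx : 0 < x) (hS₀ : S₀ ≠ 0) :
    HasDerivAt (fun y => c * y * f y) (c * (d / x)) x := by
  refine ((hasDerivAt_comp_log_div hφ hx.ne' hS₀).const_mul c).congr_of_eventuallyEq ?_
  filter_upwards [eventually_gt_nhds hx] with y hy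
  rw [hf y hy]
  field_simp

theorem deriv_deriv_const_mul_sq_mul_of_log (hf : ∀ y, 0 < y → f y = y⁻¹ * φ (log (y / S₀)))
    (c : ℝ) (hφ : ∀ u, HasDerivAt φ (φ' u) u) (hφ' : ∀ u, HasDerivAt φ' (φ'' u) u)
    (hx : 0 < x) (hS₀ : S₀ ≠ 0) :
    deriv (deriv (fun y => c * y ^ 2 * f y)) x
      = c * ((φ' (log (x / S₀)) + φ'' (log (x / S₀))) / x) := by
  have hderiv : deriv (fun y => c * y ^ 2 * f y) =ᶠ[𝓝 x]
      fun y => c * (φ (log (y / S₀)) + φ' (log (y / S₀))) := by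
    filter_upwards [eventually_gt_nhds hx] with y hy
    refine (((hasDerivAt_mul_comp_log_div (hφ _) hy.ne' hS₀).const_mul c).congr_of_eventuallyEq
      ?_).deriv
    filter_upwards [eventually_gt_nhds hy] with z hz
    rw [hf z hz]
    field_simp
  rw [hderiv.deriv_eq]
  exact ((hasDerivAt_comp_log_div ((hφ _).add (hφ' _)) hx.ne' hS₀).const_mul c).deriv

end LogCoordinate

theorem gfbm_price_fokker_planck
    (H : ℝ)
    (σ : ℝ) (hσ : 0 < σ) (r : ℝ) (S₀ : ℝ) (hS₀ : 0 < S₀)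
    (κ : ℝ) (hκ : 0 < κ)
    (P : ℝ → ℝ → ℝ)
    (hP : ∀ S : ℝ, 0 < S → ∀ t : ℝ, 0 < t →
      P S t = (S * Real.sqrt (2 * π * σ ^ 2 * κ * t ^ (2 * H)))⁻¹ *
        Real.exp (-(Real.log (S / S₀) - r * t + (1 / 2) * σ ^ 2 * κ * t ^ (2 * H)) ^ 2
          / (2 * σ ^ 2 * κ * t ^ (2 * H)))) :
    ∀ S : ℝ, 0 < S → ∀ t : ℝ, 0 < t →
      deriv (fun t' => P S t') t
        = H * κ * t ^ (2 * H - 1) *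
            deriv (deriv (fun S' => σ ^ 2 * S' ^ 2 * P S' t)) S
          - deriv (fun S' => r * S' * P S' t) S := by
  intro S hS t ht
  let V s := σ ^ 2 * κ * s ^ (2 * H)
  let m s := r * s - V s / 2
  have hPlog : ∀ x, 0 < x → ∀ s, 0 < s →
      P x s = x⁻¹ * normalDensity (m s) (V s) (log (x / S₀)) := by
    intro x hx s hs
    simp only [hP x hx s hs, normalDensity, mul_inv, m, V]
    ring_nf
  have hV : HasDerivAt V (σ ^ 2 * κ * (2 * H * t ^ (2 * H - 1))) t :=
    (hasDerivAt_rpow_const (Or.inl ht.ne')).const_mul _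
  have hm : HasDerivAt m (r - σ ^ 2 * κ * (2 * H * t ^ (2 * H - 1)) / 2) t :=
    (((hasDerivAt_id t).const_mul r).sub (hV.div_const 2)).congr_deriv (by ring)
  have htime := ((hm.normalDensity (log (S / S₀)) hV (by positivity)).const_mul S⁻¹)
    |>.congr_of_eventuallyEq <| by
      filter_upwards [eventually_gt_nhds ht] with s hs using hPlog S hS s hs
  rw [htime.deriv,
    deriv_deriv_const_mul_sq_mul_of_log (fun x hx => hPlog x hx t ht) _
      (hasDerivAt_normalDensity _ _) (hasDerivAt_neg_div_mul_normalDensity _ _) hS hS₀.ne',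
    (hasDerivAt_const_mul_self_mul_of_log (fun x hx => hPlog x hx t ht) _
      (hasDerivAt_normalDensity _ _ _) hS hS₀.ne').deriv]
  ring
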